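/- arXiv:math/0605593 — 5 statements merged into one kernel-verified Lean document; each statement's English description precedes it below -/
import Mathlib

section
/- Let b ≠ 0, 0 < α ≤ 1, E ∈ ℝ, and define Bₙ = T_{2n}T_{2n-1}, where Tₘ = [[0, 1], [-((m-1)/m)ᵅ, (E - bₘ)/mᵅ]] with b_{2n-1} = b(2n-1)ᵅ, b_{2n} = 0. Then Bₙ = [[-1, -b], [0, -1]] + (2n)^{-α}[[0, E], [-E, -bE]] + (2n)^{-1}[[α, 0], [0, α]] + O(n^{-2α}) as n → ∞, i.e., the difference of Bₙ and the sum of the first three terms has operator norm bounded by C·n^{-2α} for some constant C and all n ≥ 1. -/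
set_option maxHeartbeats 1000000


/-- The diagonal entries of the critical Jacobi matrix:
`bₙ = b nᵅ` for odd `n`, `bₙ = 0` for even `n`. -/
noncomputable def bcrit (b α : ℝ) (n : ℕ) : ℝ := if Odd n then b * (n : ℝ) ^ α else 0

/-- The one-step transfer matrix `Tₘ = [[0,1],[-((m-1)/m)ᵅ, (E - bₘ)/mᵅ]]`
of the difference equation with `aₙ = nᵅ`. -/
noncomputable def Tcrit (b α E : ℝ) (m : ℕ) : Matrix (Fin 2) (Fin 2) ℝ :=
  !![0, 1; -((((m : ℝ) - 1) / (m : ℝ)) ^ α), (E - bcrit b α m) / (m : ℝ) ^ α]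

/-- The two-step transfer matrix `Bₙ = T_{2n} T_{2n-1}`. -/
noncomputable def Bcrit (b α E : ℝ) (n : ℕ) : Matrix (Fin 2) (Fin 2) ℝ :=
  Tcrit b α E (2 * n) * Tcrit b α E (2 * n - 1)

lemma bern_upper {α x : ℝ} (h0 : 0 ≤ α) (h1 : α ≤ 1) (hx : x ≤ 1) :
    (1 - x) ^ α ≤ 1 - α * x := by
  have := rpow_one_add_le_one_add_mul_self (s := -x) (by linarith) h0 h1
  rw [← sub_eq_add_neg, mul_neg, ← sub_eq_add_neg] at this
  exact this

lemma bern_lower {α x : ℝ} (h0 : 0 < α) (h1 : α ≤ 1) (hx0 : 0 ≤ x) (hx : x ≤ 1/2) :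
    1 - α * x - 2 * x ^ 2 ≤ (1 - x) ^ α := by
  have hpos : 0 < 1 - x := by linarith
  have hlog : -(x + 2 * x ^ 2) ≤ Real.log (1 - x) := by
    have h2 : Real.log (1 - x)⁻¹ ≤ (1 - x)⁻¹ - 1 := Real.log_le_sub_one_of_pos (by positivity)
    rw [Real.log_inv] at h2
    have h3 : (1 - x)⁻¹ - 1 ≤ x + 2 * x ^ 2 := by
      rw [sub_le_iff_le_add, inv_le_iff_one_le_mul₀ hpos]
      nlinarith
    linarith
  have hmul : α * (-(x + 2 * x ^ 2)) ≤ α * Real.log (1 - x) :=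
    mul_le_mul_of_nonneg_left hlog h0.le
  calc 1 - α * x - 2 * x ^ 2 ≤ 1 + α * Real.log (1 - x) := by nlinarith [sq_nonneg x]
    _ ≤ Real.exp (α * Real.log (1 - x)) := by
        linarith [Real.add_one_le_exp (α * Real.log (1 - x))]
    _ = (1 - x) ^ α := by rw [Real.rpow_def_of_pos hpos, mul_comm]

lemma self_le_rpow {a α : ℝ} (h0 : 0 < α) (h1 : α ≤ 1) (ha0 : 0 ≤ a) (ha1 : a ≤ 1) :
    a ≤ a ^ α := by
  rcases eq_or_lt_of_le ha0 with h | h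
  · rw [← h, Real.zero_rpow h0.ne']
  · calc a = a ^ (1:ℝ) := (Real.rpow_one a).symm
      _ ≤ a ^ α := Real.rpow_le_rpow_of_exponent_ge h ha1 h1

lemma Bcrit_eq (b α E : ℝ) {n : ℕ} (hn : 1 ≤ n) :
    Bcrit b α E n =
      !![ -(((2*(n:ℝ)-2)/(2*(n:ℝ)-1))^α),
          (E - b*(2*(n:ℝ)-1)^α)/(2*(n:ℝ)-1)^α ;
          -(E/(2*(n:ℝ))^α * ((2*(n:ℝ)-2)/(2*(n:ℝ)-1))^α),
          -(((2*(n:ℝ)-1)/(2*(n:ℝ)))^α)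
            + E/(2*(n:ℝ))^α * ((E - b*(2*(n:ℝ)-1)^α)/(2*(n:ℝ)-1)^α) ] := by
  obtain ⟨m, rfl⟩ : ∃ m, n = m + 1 := ⟨n - 1, by omega⟩
  have h1 : 2 * (m + 1) - 1 = 2 * m + 1 := by omega
  have hodd : Odd (2 * m + 1) := ⟨m, by ring⟩
  have heven : ¬ Odd (2 * (m + 1)) := by simp [Nat.odd_iff]
  ext i j
  fin_cases i <;> fin_cases j
  all_goals simp [Bcrit, Tcrit, bcrit, h1, hodd, heven, Matrix.mul_apply, Fin.sum_univ_two]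
  all_goals push_cast
  all_goals ring_nf
  all_goals try tauto

lemma bound2 (b α E : ℝ) (h0 : 0 < α) (h1 : α ≤ 1) {n : ℕ} (hn : 2 ≤ n) (i j : Fin 2) :
    |(Bcrit b α E n - (!![-1, -b; 0, -1]
        + ((2 * (n : ℝ)) ^ α)⁻¹ • !![0, E; -E, -b * E]
        + (2 * (n : ℝ))⁻¹ • !![α, 0; 0, α])) i j|
      ≤ (5 + 2*|E| + E^2) * (n : ℝ) ^ (-(2 * α)) := by
  have hn1 : 1 ≤ n := by omega
  set N : ℝ := (n : ℝ) with hNdef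
  have hN : (2:ℝ) ≤ N := by rw [hNdef]; exact_mod_cast hn
  have hNpos : (0:ℝ) < N := by linarith
  have hN1 : (1:ℝ) ≤ N := by linarith
  set K := N ^ (-α) with hK
  have hKpos : 0 < K := Real.rpow_pos_of_pos hNpos _
  have hK2 : N ^ (-(2*α)) = K * K := by
    rw [hK, ← Real.rpow_add hNpos]; ring_nf
  have hNα : (0:ℝ) < N ^ α := Real.rpow_pos_of_pos hNpos _
  have hKinv : K = (N ^ α)⁻¹ := by rw [hK, Real.rpow_neg hNpos.le]
  have hA'pos : (0:ℝ) < 2*N-1 := by linarith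
  have hApos : (0:ℝ) < 2*N := by linarith
  have hA : (0:ℝ) < (2*N) ^ α := Real.rpow_pos_of_pos hApos _
  have hA' : (0:ℝ) < (2*N-1) ^ α := Real.rpow_pos_of_pos hA'pos _
  have hAinv : ((2*N) ^ α)⁻¹ ≤ K := by
    rw [hKinv]
    exact inv_anti₀ hNα (Real.rpow_le_rpow hNpos.le (by linarith) h0.le)
  have hA'inv : ((2*N-1) ^ α)⁻¹ ≤ K := by
    rw [hKinv]
    exact inv_anti₀ hNα (Real.rpow_le_rpow hNpos.le (by linarith) h0.le)
  have hAA' : (2*N-1) ^ α ≤ (2*N) ^ α := Real.rpow_le_rpow hA'pos.le (by linarith) h0.le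
  set x := (2*N-1)⁻¹ with hxdef
  set x' := (2*N)⁻¹ with hx'def
  have hxpos : 0 < x := by positivity
  have hx'pos : 0 < x' := by positivity
  have hx'x : x' ≤ x := by
    rw [hxdef, hx'def]
    exact inv_anti₀ hA'pos (by linarith)
  have hinvN : N⁻¹ ≤ K := by
    have := Real.rpow_le_rpow_of_exponent_le hN1 (by linarith : -(1:ℝ) ≤ -α)
    rwa [Real.rpow_neg_one] at this
  have hxK : x ≤ K := by
    refine le_trans ?_ hinvN
    rw [hxdef]
    exact inv_anti₀ hNpos (by linarith)
  have hx'K : x' ≤ K := le_trans hx'x hxK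
  have hxhalf : x ≤ 1/2 := by
    rw [hxdef]
    have h2' : (2:ℝ) ≤ 2*N-1 := by linarith
    have h3' := inv_anti₀ (by norm_num : (0:ℝ) < 2) h2'
    refine le_trans h3' (by norm_num)
  have hx'half : x' ≤ 1/2 := le_trans hx'x hxhalf
  have hxx' : x - x' = x * x' := by
    rw [hxdef, hx'def]; field_simp; try ring
  have hbase : (2*N-2)/(2*N-1) = 1 - x := by
    rw [hxdef]; field_simp; try ring
  have hbase' : (2*N-1)/(2*N) = 1 - x' := by
    rw [hx'def]; field_simp; try ring
  -- bounds on r = (1-x)^α and p = (1-x')^α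
  have hr_ub : (1-x)^α ≤ 1 - α * x := bern_upper h0.le h1 (by linarith)
  have hr_lb : 1 - α * x - 2 * x^2 ≤ (1-x)^α := bern_lower h0 h1 hxpos.le hxhalf
  have hr_ge : 1 - x ≤ (1-x)^α := self_le_rpow h0 h1 (by linarith) (by linarith)
  have hr_le1 : (1-x)^α ≤ 1 := Real.rpow_le_one (by linarith) (by linarith) h0.le
  have hp_ub : (1-x')^α ≤ 1 - α * x' := bern_upper h0.le h1 (by linarith)
  have hp_lb : 1 - α * x' - 2 * x'^2 ≤ (1-x')^α := bern_lower h0 h1 hx'pos.le hx'half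
  have hp_ge : 1 - x' ≤ (1-x')^α := self_le_rpow h0 h1 (by linarith) (by linarith)
  -- key product bounds
  have hxxK : x * x ≤ K * K := mul_le_mul hxK hxK hxpos.le hKpos.le
  have hxx'K : x * x' ≤ K * K := mul_le_mul hxK hx'K hx'pos.le hKpos.le
  have hx'x'K : x' * x' ≤ K * K := mul_le_mul hx'K hx'K hx'pos.le hKpos.le
  have hEabs : 0 ≤ |E| := abs_nonneg E
  have hE2 : 0 ≤ E^2 := sq_nonneg E
  have hKK : 0 ≤ K * K := by positivity
  -- inverse power difference bound
  have hinvdiff0 : 0 ≤ ((2*N-1)^α)⁻¹ - ((2*N)^α)⁻¹ := by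
    have := inv_anti₀ hA' hAA'
    linarith
  have hinvdiff : ((2*N-1)^α)⁻¹ - ((2*N)^α)⁻¹ ≤ K * K := by
    have hdiv : (1-x')^α = (2*N-1)^α / (2*N)^α := by
      rw [← hbase', Real.div_rpow hA'pos.le hApos.le]
    have h5 : 1 - x' ≤ (2*N-1)^α / (2*N)^α := hdiv ▸ hp_ge
    rw [le_div_iff₀ hA] at h5
    calc ((2*N-1)^α)⁻¹ - ((2*N)^α)⁻¹
        = ((2*N)^α - (2*N-1)^α) / ((2*N-1)^α * (2*N)^α) :=
          inv_sub_inv hA'.ne' hA.ne'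
      _ ≤ (x' * (2*N)^α) / ((2*N-1)^α * (2*N)^α) := by
          gcongr
          calc (2*N)^α - (2*N-1)^α ≤ (2*N)^α - (1-x') * (2*N)^α := by linarith
            _ = x' * (2*N)^α := by ring
      _ = x' * ((2*N)^α / ((2*N-1)^α * (2*N)^α)) := by
          rw [mul_div_assoc]
      _ = x' * ((2*N-1)^α)⁻¹ := by
          rw [mul_comm ((2*N-1)^α) ((2*N)^α), div_mul_cancel_left₀ hA.ne']
      _ ≤ K * K := mul_le_mul hx'K hA'inv (by positivity) hKpos.le
  rw [Bcrit_eq b α E hn1, ← hNdef]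
  have hb00 : |(!![ -(((2*N-2)/(2*N-1))^α),
          (E - b*(2*N-1)^α)/(2*N-1)^α ;
          -(E/(2*N)^α * ((2*N-2)/(2*N-1))^α),
          -(((2*N-1)/(2*N))^α)
            + E/(2*N)^α * ((E - b*(2*N-1)^α)/(2*N-1)^α) ]
        - (!![-1, -b; 0, -1] + ((2*N) ^ α)⁻¹ • !![0, E; -E, -b * E]
          + x' • !![α, 0; 0, α])) 0 0|
      ≤ (5 + 2*|E| + E^2) * N ^ (-(2 * α)) := by
    have e : (!![ -(((2*N-2)/(2*N-1))^α),
          (E - b*(2*N-1)^α)/(2*N-1)^α ;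
          -(E/(2*N)^α * ((2*N-2)/(2*N-1))^α),
          -(((2*N-1)/(2*N))^α)
            + E/(2*N)^α * ((E - b*(2*N-1)^α)/(2*N-1)^α) ]
        - (!![-1, -b; 0, -1] + ((2*N) ^ α)⁻¹ • !![0, E; -E, -b * E]
          + x' • !![α, 0; 0, α])) 0 0
        = 1 - (1-x)^α - α * x' := by
      simp [Matrix.sub_apply, Matrix.add_apply, Matrix.smul_apply, hbase]
      ring
    rw [e, hK2, abs_le]
    have hsq : x^2 = x*x := sq x
    have h9 : α*(x*x') ≤ x*x' := mul_le_of_le_one_left (by positivity) h1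
    have h10 : 0 ≤ α*(x*x') := by positivity
    have h12 : α*x - α*x' = α*(x*x') := by rw [← hxx']; ring
    have hc1 : (0:ℝ) ≤ (2+2*|E|+E^2)*(K*K) := by positivity
    have hc2 : (0:ℝ) ≤ (5+2*|E|+E^2)*(K*K) := by positivity
    constructor
    · linarith
    · linarith
  have hb01 : |(!![ -(((2*N-2)/(2*N-1))^α),
          (E - b*(2*N-1)^α)/(2*N-1)^α ;
          -(E/(2*N)^α * ((2*N-2)/(2*N-1))^α),
          -(((2*N-1)/(2*N))^α)
            + E/(2*N)^α * ((E - b*(2*N-1)^α)/(2*N-1)^α) ]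
        - (!![-1, -b; 0, -1] + ((2*N) ^ α)⁻¹ • !![0, E; -E, -b * E]
          + x' • !![α, 0; 0, α])) 0 1|
      ≤ (5 + 2*|E| + E^2) * N ^ (-(2 * α)) := by
    have e : (!![ -(((2*N-2)/(2*N-1))^α),
          (E - b*(2*N-1)^α)/(2*N-1)^α ;
          -(E/(2*N)^α * ((2*N-2)/(2*N-1))^α),
          -(((2*N-1)/(2*N))^α)
            + E/(2*N)^α * ((E - b*(2*N-1)^α)/(2*N-1)^α) ]
        - (!![-1, -b; 0, -1] + ((2*N) ^ α)⁻¹ • !![0, E; -E, -b * E]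
          + x' • !![α, 0; 0, α])) 0 1
        = E * (((2*N-1)^α)⁻¹ - ((2*N)^α)⁻¹) := by
      simp [Matrix.sub_apply, Matrix.add_apply, Matrix.smul_apply]
      field_simp
      ring
    rw [e, hK2, abs_mul, abs_of_nonneg hinvdiff0]
    have h8 : |E| * (((2*N-1)^α)⁻¹ - ((2*N)^α)⁻¹) ≤ |E| * (K*K) :=
      mul_le_mul_of_nonneg_left hinvdiff hEabs
    have hc1 : (0:ℝ) ≤ (5+|E|+E^2)*(K*K) := by positivity
    linarith
  have hb10 : |(!![ -(((2*N-2)/(2*N-1))^α),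
          (E - b*(2*N-1)^α)/(2*N-1)^α ;
          -(E/(2*N)^α * ((2*N-2)/(2*N-1))^α),
          -(((2*N-1)/(2*N))^α)
            + E/(2*N)^α * ((E - b*(2*N-1)^α)/(2*N-1)^α) ]
        - (!![-1, -b; 0, -1] + ((2*N) ^ α)⁻¹ • !![0, E; -E, -b * E]
          + x' • !![α, 0; 0, α])) 1 0|
      ≤ (5 + 2*|E| + E^2) * N ^ (-(2 * α)) := by
    have e : (!![ -(((2*N-2)/(2*N-1))^α),
          (E - b*(2*N-1)^α)/(2*N-1)^α ;
          -(E/(2*N)^α * ((2*N-2)/(2*N-1))^α),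
          -(((2*N-1)/(2*N))^α)
            + E/(2*N)^α * ((E - b*(2*N-1)^α)/(2*N-1)^α) ]
        - (!![-1, -b; 0, -1] + ((2*N) ^ α)⁻¹ • !![0, E; -E, -b * E]
          + x' • !![α, 0; 0, α])) 1 0
        = E * (((2*N)^α)⁻¹ * (1 - (1-x)^α)) := by
      simp [Matrix.sub_apply, Matrix.add_apply, Matrix.smul_apply, hbase]
      ring
    rw [e, hK2, abs_mul]
    have h6 : 0 ≤ ((2*N)^α)⁻¹ * (1 - (1-x)^α) := by
      apply mul_nonneg (by positivity); linarith
    rw [abs_of_nonneg h6]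
    have h7 : ((2*N)^α)⁻¹ * (1 - (1-x)^α) ≤ K * K := by
      have h5' : 1 - (1-x)^α ≤ x := by linarith
      calc ((2*N)^α)⁻¹ * (1 - (1-x)^α) ≤ K * x :=
            mul_le_mul hAinv h5' (by linarith) hKpos.le
        _ ≤ K * K := mul_le_mul_of_nonneg_left hxK hKpos.le
    have h8 : |E| * (((2*N)^α)⁻¹ * (1 - (1-x)^α)) ≤ |E| * (K*K) :=
      mul_le_mul_of_nonneg_left h7 hEabs
    have hc1 : (0:ℝ) ≤ (5+|E|+E^2)*(K*K) := by positivity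
    linarith
  have hb11 : |(!![ -(((2*N-2)/(2*N-1))^α),
          (E - b*(2*N-1)^α)/(2*N-1)^α ;
          -(E/(2*N)^α * ((2*N-2)/(2*N-1))^α),
          -(((2*N-1)/(2*N))^α)
            + E/(2*N)^α * ((E - b*(2*N-1)^α)/(2*N-1)^α) ]
        - (!![-1, -b; 0, -1] + ((2*N) ^ α)⁻¹ • !![0, E; -E, -b * E]
          + x' • !![α, 0; 0, α])) 1 1|
      ≤ (5 + 2*|E| + E^2) * N ^ (-(2 * α)) := by
    have e : (!![ -(((2*N-2)/(2*N-1))^α),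
          (E - b*(2*N-1)^α)/(2*N-1)^α ;
          -(E/(2*N)^α * ((2*N-2)/(2*N-1))^α),
          -(((2*N-1)/(2*N))^α)
            + E/(2*N)^α * ((E - b*(2*N-1)^α)/(2*N-1)^α) ]
        - (!![-1, -b; 0, -1] + ((2*N) ^ α)⁻¹ • !![0, E; -E, -b * E]
          + x' • !![α, 0; 0, α])) 1 1
        = (1 - (1-x')^α - α * x') + E^2 * (((2*N)^α)⁻¹ * ((2*N-1)^α)⁻¹) := by
      simp [Matrix.sub_apply, Matrix.add_apply, Matrix.smul_apply, hbase']
      field_simp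
      ring
    rw [e, hK2, abs_le]
    have hu0 : 0 ≤ ((2*N)^α)⁻¹ * ((2*N-1)^α)⁻¹ := by positivity
    have huK : ((2*N)^α)⁻¹ * ((2*N-1)^α)⁻¹ ≤ K * K :=
      mul_le_mul hAinv hA'inv (by positivity) hKpos.le
    have h8 : E^2 * (((2*N)^α)⁻¹ * ((2*N-1)^α)⁻¹) ≤ E^2 * (K*K) :=
      mul_le_mul_of_nonneg_left huK hE2
    have h9 : 0 ≤ E^2 * (((2*N)^α)⁻¹ * ((2*N-1)^α)⁻¹) := mul_nonneg hE2 hu0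
    have hsq' : x'^2 = x'*x' := sq x'
    have hc1 : (0:ℝ) ≤ (3+2*|E|)*(K*K) := by positivity
    have hc2 : (0:ℝ) ≤ (5+2*|E|+E^2)*(K*K) := by positivity
    constructor
    · linarith
    · linarith
  fin_cases i <;> fin_cases j
  · exact hb00
  · exact hb01
  · exact hb10
  · exact hb11

/-- `Bₙ = [[-1,-b],[0,-1]] + (2n)^{-α}[[0,E],[-E,-bE]]
+ (2n)^{-1}[[α,0],[0,α]] + O(n^{-2α})`, entrywise (equivalently, in any fixed
matrix norm). -/
theorem stmt3 (b α E : ℝ) (hb : b ≠ 0) (h0 : 0 < α) (h1 : α ≤ 1) :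
    ∃ C : ℝ, ∀ n : ℕ, 1 ≤ n → ∀ i j : Fin 2,
      |(Bcrit b α E n - (!![-1, -b; 0, -1]
          + ((2 * (n : ℝ)) ^ α)⁻¹ • !![0, E; -E, -b * E]
          + (2 * (n : ℝ))⁻¹ • !![α, 0; 0, α])) i j|
        ≤ C * (n : ℝ) ^ (-(2 * α)) := by
  obtain ⟨C1, hC1⟩ : ∃ C1 : ℝ, ∀ i j : Fin 2,
      |(Bcrit b α E 1 - (!![-1, -b; 0, -1]
          + ((2 * ((1:ℕ) : ℝ)) ^ α)⁻¹ • !![0, E; -E, -b * E]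
          + (2 * ((1:ℕ) : ℝ))⁻¹ • !![α, 0; 0, α])) i j| ≤ C1 := by
    refine ⟨∑ i : Fin 2, ∑ j : Fin 2,
      |(Bcrit b α E 1 - (!![-1, -b; 0, -1]
          + ((2 * ((1:ℕ) : ℝ)) ^ α)⁻¹ • !![0, E; -E, -b * E]
          + (2 * ((1:ℕ) : ℝ))⁻¹ • !![α, 0; 0, α])) i j|, fun i j => ?_⟩
    calc |(Bcrit b α E 1 - (!![-1, -b; 0, -1]
          + ((2 * ((1:ℕ) : ℝ)) ^ α)⁻¹ • !![0, E; -E, -b * E]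
          + (2 * ((1:ℕ) : ℝ))⁻¹ • !![α, 0; 0, α])) i j|
        ≤ ∑ j' : Fin 2, |(Bcrit b α E 1 - (!![-1, -b; 0, -1]
          + ((2 * ((1:ℕ) : ℝ)) ^ α)⁻¹ • !![0, E; -E, -b * E]
          + (2 * ((1:ℕ) : ℝ))⁻¹ • !![α, 0; 0, α])) i j'| :=
          Finset.single_le_sum
            (f := fun j' : Fin 2 => |(Bcrit b α E 1 - (!![-1, -b; 0, -1]
              + ((2 * ((1:ℕ) : ℝ)) ^ α)⁻¹ • !![0, E; -E, -b * E]
              + (2 * ((1:ℕ) : ℝ))⁻¹ • !![α, 0; 0, α])) i j'|)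
            (fun _ _ => abs_nonneg _) (Finset.mem_univ j)
      _ ≤ _ :=
          Finset.single_le_sum
            (f := fun i' : Fin 2 => ∑ j' : Fin 2, |(Bcrit b α E 1 - (!![-1, -b; 0, -1]
              + ((2 * ((1:ℕ) : ℝ)) ^ α)⁻¹ • !![0, E; -E, -b * E]
              + (2 * ((1:ℕ) : ℝ))⁻¹ • !![α, 0; 0, α])) i' j'|)
            (fun _ _ => Finset.sum_nonneg fun _ _ => abs_nonneg _) (Finset.mem_univ i)
  have hC1nn : 0 ≤ C1 := le_trans (abs_nonneg _) (hC1 0 0)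
  have hC0 : (0:ℝ) ≤ 5 + 2*|E| + E^2 := by positivity
  refine ⟨5 + 2*|E| + E^2 + C1, fun n hn i j => ?_⟩
  rcases eq_or_lt_of_le hn with h | h
  · -- n = 1
    subst h
    rw [Nat.cast_one, Real.one_rpow, mul_one]
    have := hC1 i j
    rw [Nat.cast_one] at this
    linarith
  · -- 2 ≤ n
    have h2 : 2 ≤ n := h
    have hnn : (0:ℝ) ≤ (n : ℝ) ^ (-(2*α)) :=
      Real.rpow_nonneg (by positivity) _
    calc |(Bcrit b α E n - (!![-1, -b; 0, -1]
          + ((2 * (n : ℝ)) ^ α)⁻¹ • !![0, E; -E, -b * E]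
          + (2 * (n : ℝ))⁻¹ • !![α, 0; 0, α])) i j|
        ≤ (5 + 2*|E| + E^2) * (n : ℝ) ^ (-(2 * α)) := bound2 b α E h0 h1 h2 i j
      _ ≤ (5 + 2*|E| + E^2 + C1) * (n : ℝ) ^ (-(2 * α)) := by
          have := mul_nonneg hC1nn hnn
          nlinarith
end

section
/- Suppose uₙ is a complex sequence such that uₙ = c₊n^{-α/4}e^{iφ(n)} + c₋n^{-α/4}e^{-iφ(n)} + o(n^{-α/4}) with (c₊, c₋) ≠ (0,0) and φ(n) = (√(-bE)/2^{α/2})·n^{1-α/2}/(1-α/2), where 0 < α ≤ 1, b > 0, E < 0. Then there exist positive constants C₁, C₂ with C₁N^{1-α/2} ≤ ∑_{n=1}^N |uₙ|² ≤ C₂N^{1-α/2} for all large N. -/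
/-!
Write `vₙ = n^{-α/4} (c₊ e^{iφ(n)} + c₋ e^{-iφ(n)})`. Expanding the square,
`|vₙ|² = n^{-α/2} (|c₊|² + |c₋|²) + 2 Re (c₊ c̄₋ n^{-α/2} e^{2iφ(n)})`. The first part sums to a
quantity between `N^{1-α/2}` and `N^{1-α/2} / (1 - α/2)`. In the second, `n^{-α/2}` is a constant
multiple of `φ'(n)`, so `n^{-α/2} e^{2iφ(n)}` is, up to the error of a one-step Taylor expansion,
the increment of the bounded function `e^{2iφ}`; this makes the oscillating sum `o(N^{1-α/2})`.
Finally `∑ |uₙ - vₙ|² = o(N^{1-α/2})`, and `|u|² ≤ 2|v|² + 2|u - v|²` (and the same with `u`, `v`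
exchanged) transfers the two-sided bound from `v` to `u`.
-/

open Filter Asymptotics Finset

theorem sum_Icc_one_eq_sum_range {M : Type*} [AddCommMonoid M] (f : ℕ → M) (N : ℕ) :
    ∑ n ∈ Icc 1 N, f n = ∑ i ∈ range N, f (i + 1) := by
  rw [← Ico_add_one_right_eq_Icc, sum_Ico_eq_sum_range, Nat.add_sub_cancel]
  simp only [add_comm 1]

theorem rpow_one_sub_le_sum_Icc_rpow_neg {s : ℝ} (hs0 : 0 ≤ s) (hs1 : s < 1) (N : ℕ) :
    (N : ℝ) ^ (1 - s) ≤ ∑ n ∈ Icc 1 N, (n : ℝ) ^ (-s) := by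
  rcases N.eq_zero_or_pos with rfl | hN
  · simp [Real.zero_rpow (by linarith : (1 : ℝ) - s ≠ 0)]
  have hN' : (0 : ℝ) < N := by exact_mod_cast hN
  calc (N : ℝ) ^ (1 - s) = ∑ _n ∈ Icc 1 N, (N : ℝ) ^ (-s) := by
        rw [sum_const, Nat.card_Icc, Nat.add_sub_cancel, nsmul_eq_mul, sub_eq_add_neg,
          Real.rpow_add hN', Real.rpow_one]
    _ ≤ ∑ n ∈ Icc 1 N, (n : ℝ) ^ (-s) := by
        refine sum_le_sum fun n hn => ?_
        obtain ⟨hn1, hnN⟩ := mem_Icc.1 hn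
        exact Real.rpow_le_rpow_of_nonpos (Nat.cast_pos.2 hn1) (Nat.cast_le.2 hnN)
          (neg_nonpos.2 hs0)

theorem sum_Icc_rpow_neg_le {s : ℝ} (hs0 : 0 ≤ s) (hs1 : s < 1) (N : ℕ) :
    ∑ n ∈ Icc 1 N, (n : ℝ) ^ (-s) ≤ (N : ℝ) ^ (1 - s) / (1 - s) := by
  have h1s : 0 < 1 - s := by linarith
  rcases N.eq_zero_or_pos with rfl | hN
  · simp [Real.zero_rpow h1s.ne']
  obtain ⟨M, rfl⟩ : ∃ M, N = M + 1 := ⟨N - 1, by omega⟩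
  have hanti : AntitoneOn (fun x : ℝ => x ^ (-s)) (Set.Icc 1 (1 + M)) :=
    (Real.antitoneOn_rpow_Ioi_of_exponent_nonpos (by linarith)).mono fun x hx =>
      Set.mem_Ioi.2 (lt_of_lt_of_le one_pos hx.1)
  have hint := hanti.sum_le_integral
  rw [integral_rpow (Or.inl (by linarith)), neg_add_eq_sub, Real.one_rpow] at hint
  rw [sum_Icc_one_eq_sum_range, sum_range_succ']
  push_cast at hint ⊢
  have : 1 ≤ 1 / (1 - s) := by rw [le_div_iff₀ h1s]; linarith
  calc _ ≤ ((1 + M : ℝ) ^ (1 - s) - 1) / (1 - s) + 1 := by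
        simp only [Real.one_rpow]
        gcongr
        exact (sum_congr rfl fun i _ => by ring_nf).trans_le hint
    _ ≤ _ := by rw [sub_div, add_comm (M : ℝ)]; linarith

theorem isLittleO_natCast_rpow_rpow {a b : ℝ} (hab : a < b) :
    (fun N : ℕ => (N : ℝ) ^ a) =o[atTop] fun N => (N : ℝ) ^ b := by
  have hreal : (fun x : ℝ => x ^ a) =o[atTop] fun x => x ^ b := by
    refine (isLittleO_iff_tendsto' ?_).2 ?_
    · filter_upwards [eventually_gt_atTop 0] with x hx h
      exact absurd h (Real.rpow_pos_of_pos hx b).ne'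
    · refine (tendsto_rpow_neg_atTop (sub_pos.2 hab)).congr' ?_
      filter_upwards [eventually_gt_atTop 0] with x hx
      rw [← Real.rpow_sub hx, neg_sub]
  exact hreal.comp_tendsto tendsto_natCast_atTop_atTop

theorem Asymptotics.IsLittleO.sum_Icc {E : Type*} [NormedAddCommGroup E] {f : ℕ → E}
    {g : ℕ → ℝ} (h : f =o[atTop] g) (hg : 0 ≤ g)
    (h'g : Tendsto (fun N => ∑ n ∈ Icc 1 N, g n) atTop atTop) :
    (fun N => ∑ n ∈ Icc 1 N, f n) =o[atTop] fun N => ∑ n ∈ Icc 1 N, g n := by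
  simp only [sum_Icc_one_eq_sum_range] at h'g ⊢
  exact (h.comp_tendsto (tendsto_add_atTop_nat 1)).sum_range (fun n => hg (n + 1)) h'g

theorem norm_sub_sub_le_of_hasDerivAt {E : Type*} [NormedAddCommGroup E] [NormedSpace ℝ E]
    {G g g' : ℝ → E} {a M : ℝ} (hG : ∀ x ∈ Set.Icc a (a + 1), HasDerivAt G (g x) x)
    (hg : ∀ x ∈ Set.Icc a (a + 1), HasDerivAt g (g' x) x)
    (hM : ∀ x ∈ Set.Icc a (a + 1), ‖g' x‖ ≤ M) :
    ‖G (a + 1) - G a - g a‖ ≤ M := by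
  have ha : a ∈ Set.Icc a (a + 1) := ⟨le_rfl, by linarith⟩
  have hb : a + 1 ∈ Set.Icc a (a + 1) := ⟨by linarith, le_rfl⟩
  have hM0 : 0 ≤ M := (norm_nonneg _).trans (hM a ha)
  have hg_near : ∀ x ∈ Set.Icc a (a + 1), ‖g x - g a‖ ≤ M := fun x hx => by
    have hxa : ‖x - a‖ ≤ 1 := by
      rw [Real.norm_eq_abs, abs_le]; constructor <;> linarith [hx.1, hx.2]
    exact ((convex_Icc a (a + 1)).norm_image_sub_le_of_norm_hasDerivWithin_le
      (fun y hy => (hg y hy).hasDerivWithinAt) hM ha hx).trans (mul_le_of_le_one_right hM0 hxa)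
  have hH : ∀ x ∈ Set.Icc a (a + 1), HasDerivAt (fun y => G y - y • g a) (g x - g a) x :=
    fun x hx => by simpa using (hG x hx).fun_sub ((hasDerivAt_id x).smul_const (g a))
  calc ‖G (a + 1) - G a - g a‖ = ‖(G (a + 1) - (a + 1) • g a) - (G a - a • g a)‖ := by
        rw [add_smul, one_smul]; congr 1; abel
    _ ≤ M * ‖a + 1 - a‖ := (convex_Icc a (a + 1)).norm_image_sub_le_of_norm_hasDerivWithin_le
        (fun y hy => (hH y hy).hasDerivWithinAt) hg_near ha hb
    _ = M := by simp

theorem norm_sum_Icc_sub_sub_le {E : Type*} [NormedAddCommGroup E] [NormedSpace ℝ E]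
    {G g g' : ℝ → E} {M : ℕ → ℝ} (hG : ∀ x : ℝ, 1 ≤ x → HasDerivAt G (g x) x)
    (hg : ∀ x : ℝ, 1 ≤ x → HasDerivAt g (g' x) x)
    (hM : ∀ n : ℕ, 1 ≤ n → ∀ x ∈ Set.Icc (n : ℝ) (n + 1), ‖g' x‖ ≤ M n) (N : ℕ) :
    ‖∑ n ∈ Icc 1 N, g n - (G (N + 1) - G 1)‖ ≤ ∑ n ∈ Icc 1 N, M n := by
  have htel : G (N + 1) - G 1 = ∑ n ∈ Icc 1 N, (G (n + 1) - G n) := by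
    rw [sum_Icc_one_eq_sum_range]
    simpa using (sum_range_sub (fun i : ℕ => G (i + 1)) N).symm
  rw [htel, ← sum_sub_distrib]
  refine norm_sum_le_of_le _ fun n hn => ?_
  have hn1 : (1 : ℝ) ≤ n := by exact_mod_cast (mem_Icc.1 hn).1
  rw [norm_sub_rev]
  exact norm_sub_sub_le_of_hasDerivAt (fun x hx => hG x (hn1.trans hx.1))
    (fun x hx => hg x (hn1.trans hx.1)) (hM n (mem_Icc.1 hn).1)

theorem hasDerivAt_cexp_I_mul_rpow_one_sub_div {s K x : ℝ} (hs1 : s ≠ 1) (hx : 0 < x) :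
    HasDerivAt (fun x : ℝ => Complex.exp (Complex.I * ((K * (x ^ (1 - s) / (1 - s)) : ℝ) : ℂ)))
      (Complex.exp (Complex.I * ((K * (x ^ (1 - s) / (1 - s)) : ℝ) : ℂ)) *
        (Complex.I * ((K * x ^ (-s) : ℝ) : ℂ))) x := by
  have hψ : HasDerivAt (fun x : ℝ => K * (x ^ (1 - s) / (1 - s))) (K * x ^ (-s)) x := by
    refine (((Real.hasDerivAt_rpow_const (Or.inl hx.ne')).div_const (1 - s)).const_mul
      K).congr_deriv ?_
    rw [show 1 - s - 1 = -s by ring, mul_div_cancel_left₀ _ (sub_ne_zero.2 hs1.symm)]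
  exact (hψ.ofReal_comp.const_mul Complex.I).cexp

theorem norm_rpow_mul_cexp_deriv_le {s K x : ℝ} (hs0 : 0 ≤ s) (hs1 : s ≤ 1) (hK : 0 ≤ K)
    (hx : 1 ≤ x) {z : ℂ} (hz : ‖z‖ = 1) :
    ‖((-s * x ^ (-s - 1) : ℝ) : ℂ) * z +
        ((x ^ (-s) : ℝ) : ℂ) * (z * (Complex.I * ((K * x ^ (-s) : ℝ) : ℂ)))‖ ≤
      (s + K) * x ^ (-(2 * s)) := by
  have hx0 : 0 < x := zero_lt_one.trans_le hx
  calc _ ≤ s * x ^ (-s - 1) + K * (x ^ (-s) * x ^ (-s)) := by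
        refine (norm_add_le _ _).trans (le_of_eq ?_)
        simp only [norm_mul, hz, Complex.norm_real, Complex.norm_I, Real.norm_eq_abs, abs_neg,
          abs_of_nonneg hs0, abs_of_nonneg hK, abs_of_pos (Real.rpow_pos_of_pos hx0 _)]
        ring
    _ ≤ s * x ^ (-(2 * s)) + K * x ^ (-(2 * s)) := by
        rw [← Real.rpow_add hx0, show -s + -s = -(2 * s) by ring]
        gcongr
        linarith
    _ = (s + K) * x ^ (-(2 * s)) := by ring

theorem norm_sum_Icc_rpow_mul_cexp_le {s K : ℝ} (hs0 : 0 ≤ s) (hs1 : s < 1) (hK : 0 < K)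
    (N : ℕ) :
    ‖∑ n ∈ Icc 1 N, (((n : ℝ) ^ (-s) : ℝ) : ℂ) *
        Complex.exp (Complex.I * ((K * ((n : ℝ) ^ (1 - s) / (1 - s)) : ℝ) : ℂ))‖ ≤
      2 / K + (s + K) * ∑ n ∈ Icc 1 N, (n : ℝ) ^ (-(2 * s)) := by
  set e : ℝ → ℂ := fun x => Complex.exp (Complex.I * ((K * (x ^ (1 - s) / (1 - s)) : ℝ) : ℂ))
  have he_norm : ∀ x, ‖e x‖ = 1 := fun x => by
    simp only [e, mul_comm Complex.I, Complex.norm_exp_ofReal_mul_I]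
  have he : ∀ x : ℝ, 1 ≤ x → HasDerivAt e (e x * (Complex.I * ((K * x ^ (-s) : ℝ) : ℂ))) x :=
    fun x hx => hasDerivAt_cexp_I_mul_rpow_one_sub_div hs1.ne (zero_lt_one.trans_le hx)
  have hG : ∀ x : ℝ, 1 ≤ x → HasDerivAt (fun x => e x / (Complex.I * K))
      ((x ^ (-s) : ℝ) * e x) x := fun x hx => by
    refine ((he x hx).div_const (Complex.I * K)).congr_deriv ?_
    rw [div_eq_iff (mul_ne_zero Complex.I_ne_zero (Complex.ofReal_ne_zero.2 hK.ne'))]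
    push_cast
    ring
  have hg : ∀ x : ℝ, 1 ≤ x → HasDerivAt (fun x => ((x ^ (-s) : ℝ) : ℂ) * e x)
      (((-s * x ^ (-s - 1) : ℝ) : ℂ) * e x +
        ((x ^ (-s) : ℝ) : ℂ) * (e x * (Complex.I * ((K * x ^ (-s) : ℝ) : ℂ)))) x := fun x hx =>
    (Real.hasDerivAt_rpow_const (Or.inl (zero_lt_one.trans_le hx).ne')).ofReal_comp.mul (he x hx)
  have hg_le : ∀ n : ℕ, 1 ≤ n → ∀ x ∈ Set.Icc (n : ℝ) (n + 1),
      ‖((-s * x ^ (-s - 1) : ℝ) : ℂ) * e x +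
        ((x ^ (-s) : ℝ) : ℂ) * (e x * (Complex.I * ((K * x ^ (-s) : ℝ) : ℂ)))‖ ≤
        (s + K) * (n : ℝ) ^ (-(2 * s)) := fun n hn x hx => by
    have hn1 : (1 : ℝ) ≤ n := by exact_mod_cast hn
    refine (norm_rpow_mul_cexp_deriv_le hs0 hs1.le hK.le (hn1.trans hx.1) (he_norm x)).trans ?_
    exact mul_le_mul_of_nonneg_left (Real.rpow_le_rpow_of_nonpos (by positivity) hx.1
      (by linarith)) (by linarith)
  have hG_norm : ∀ x, ‖e x / (Complex.I * K)‖ = 1 / K := fun x => by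
    rw [norm_div, he_norm, norm_mul, Complex.norm_I, Complex.norm_real, Real.norm_of_nonneg hK.le,
      one_mul]
  have hsum := norm_sum_Icc_sub_sub_le hG hg hg_le N
  calc _ ≤ ‖∑ n ∈ Icc 1 N, ((((n : ℝ) ^ (-s) : ℝ) : ℂ) * e n) -
        (e (N + 1) / (Complex.I * K) - e 1 / (Complex.I * K))‖ +
        ‖e (N + 1) / (Complex.I * K) - e 1 / (Complex.I * K)‖ := norm_le_norm_sub_add _ _
    _ ≤ (∑ n ∈ Icc 1 N, (s + K) * (n : ℝ) ^ (-(2 * s))) + (1 / K + 1 / K) := by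
        gcongr
        exact (norm_sub_le _ _).trans (by rw [hG_norm, hG_norm])
    _ = _ := by rw [← mul_sum]; ring

theorem isLittleO_sum_Icc_rpow_mul_cexp {s K : ℝ} (hs0 : 0 < s) (hs1 : s < 1) (hK : 0 < K) :
    (fun N : ℕ => ∑ n ∈ Icc 1 N, (((n : ℝ) ^ (-s) : ℝ) : ℂ) *
        Complex.exp (Complex.I * ((K * ((n : ℝ) ^ (1 - s) / (1 - s)) : ℝ) : ℂ))) =o[atTop]
      fun N => (N : ℝ) ^ (1 - s) := by
  obtain ⟨t, hst, ht2s, ht1⟩ : ∃ t, s < t ∧ t ≤ 2 * s ∧ t < 1 :=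
    ⟨min (2 * s) ((1 + s) / 2), lt_min (by linarith) (by linarith), min_le_left _ _,
      min_lt_of_right_lt (by linarith)⟩
  have hbound : ∀ N : ℕ, ‖∑ n ∈ Icc 1 N, (((n : ℝ) ^ (-s) : ℝ) : ℂ) *
      Complex.exp (Complex.I * ((K * ((n : ℝ) ^ (1 - s) / (1 - s)) : ℝ) : ℂ))‖ ≤
      2 / K + (s + K) / (1 - t) * (N : ℝ) ^ (1 - t) := fun N => by
    refine (norm_sum_Icc_rpow_mul_cexp_le hs0.le hs1 hK N).trans ?_
    have hsum : ∑ n ∈ Icc 1 N, (n : ℝ) ^ (-(2 * s)) ≤ ∑ n ∈ Icc 1 N, (n : ℝ) ^ (-t) :=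
      sum_le_sum fun n hn => Real.rpow_le_rpow_of_exponent_le
        (by exact_mod_cast (mem_Icc.1 hn).1) (by linarith)
    have := (sum_Icc_rpow_neg_le (by linarith) ht1 N)
    rw [div_mul_eq_mul_div, mul_div_assoc]
    gcongr
    exact hsum.trans this
  have hconst : (fun _ : ℕ => 2 / K) =o[atTop] fun N : ℕ => (N : ℝ) ^ (1 - s) :=
    isLittleO_const_left.2 <| Or.inr <| tendsto_norm_atTop_atTop.comp <|
      (tendsto_rpow_atTop (sub_pos.2 hs1)).comp tendsto_natCast_atTop_atTop
  refine IsBigO.trans_isLittleO (IsBigO.of_bound 1 (Eventually.of_forall fun N => ?_))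
    (hconst.add ((isLittleO_natCast_rpow_rpow (by linarith : 1 - t < 1 - s)).const_mul_left
      ((s + K) / (1 - t))))
  rw [one_mul, Real.norm_of_nonneg (by positivity)]
  exact hbound N

theorem norm_mul_cexp_add_mul_cexp_neg_sq (a b : ℂ) (t : ℝ) :
    ‖a * Complex.exp (Complex.I * t) + b * Complex.exp (-Complex.I * t)‖ ^ 2 =
      ‖a‖ ^ 2 + ‖b‖ ^ 2 + 2 * (a * (starRingEnd ℂ) b * Complex.exp (Complex.I * ↑(2 * t))).re := by
  set z := Complex.exp (Complex.I * t)
  have hz : ‖z‖ = 1 := by simp only [z, mul_comm Complex.I, Complex.norm_exp_ofReal_mul_I]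
  have hz_neg : Complex.exp (-Complex.I * t) = (starRingEnd ℂ) z := by
    rw [← Complex.exp_conj]; simp
  have hz_sq : Complex.exp (Complex.I * ↑(2 * t)) = z * z := by
    rw [← Complex.exp_add]; push_cast; ring_nf
  rw [hz_neg, hz_sq, Complex.sq_norm, Complex.normSq_add, Complex.normSq_mul, Complex.normSq_mul,
    Complex.normSq_conj, Complex.normSq_eq_norm_sq z, hz, Complex.normSq_eq_norm_sq,
    Complex.normSq_eq_norm_sq, map_mul, Complex.conj_conj]
  ring_nf

noncomputable def oscillatingProfile (cp cm : ℂ) (s : ℝ) (φ : ℕ → ℝ) (n : ℕ) : ℂ :=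
  cp * (((n : ℝ) ^ (-(s / 2)) : ℝ) : ℂ) * Complex.exp (Complex.I * (φ n : ℝ))
    + cm * (((n : ℝ) ^ (-(s / 2)) : ℝ) : ℂ) * Complex.exp (-Complex.I * (φ n : ℝ))

theorem sq_norm_oscillatingProfile (cp cm : ℂ) (s : ℝ) (φ : ℕ → ℝ) (n : ℕ) :
    ‖oscillatingProfile cp cm s φ n‖ ^ 2 = (‖cp‖ ^ 2 + ‖cm‖ ^ 2) * (n : ℝ) ^ (-s) +
      2 * (cp * (starRingEnd ℂ) cm *
        ((((n : ℝ) ^ (-s) : ℝ) : ℂ) * Complex.exp (Complex.I * ↑(2 * φ n)))).re := by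
  have hr : ((n : ℝ) ^ (-(s / 2))) ^ 2 = (n : ℝ) ^ (-s) := by
    rw [← Real.rpow_natCast, ← Real.rpow_mul (Nat.cast_nonneg n)]; ring_nf
  rw [oscillatingProfile, show ∀ r : ℂ, cp * r * Complex.exp (Complex.I * (φ n : ℝ))
      + cm * r * Complex.exp (-Complex.I * (φ n : ℝ)) =
        r * (cp * Complex.exp (Complex.I * (φ n : ℝ)) + cm * Complex.exp (-Complex.I * (φ n : ℝ)))
      from fun r => by ring,
    norm_mul, mul_pow, norm_mul_cexp_add_mul_cexp_neg_sq, Complex.norm_real, Real.norm_eq_abs,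
    sq_abs, hr, mul_left_comm _ (((n : ℝ) ^ (-s) : ℝ) : ℂ), Complex.re_ofReal_mul]
  ring

theorem eventually_bounds_sum_Icc_sq_norm_oscillatingProfile {s K : ℝ} (hs0 : 0 < s)
    (hs1 : s < 1) (hK : 0 < K) {cp cm : ℂ} (hc : ¬(cp = 0 ∧ cm = 0)) {φ : ℕ → ℝ}
    (hφ : ∀ n : ℕ, φ n = K * ((n : ℝ) ^ (1 - s) / (1 - s))) :
    ∃ C₁ C₂ : ℝ, 0 < C₁ ∧ 0 < C₂ ∧ ∀ᶠ N : ℕ in atTop,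
      C₁ * (N : ℝ) ^ (1 - s) ≤ ∑ n ∈ Icc 1 N, ‖oscillatingProfile cp cm s φ n‖ ^ 2 ∧
      ∑ n ∈ Icc 1 N, ‖oscillatingProfile cp cm s φ n‖ ^ 2 ≤ C₂ * (N : ℝ) ^ (1 - s) := by
  set S := ‖cp‖ ^ 2 + ‖cm‖ ^ 2
  have hS : 0 < S := by
    rcases not_and_or.1 hc with h | h
    · have := norm_pos_iff.2 h; positivity
    · have := norm_pos_iff.2 h; positivity
  set w := cp * (starRingEnd ℂ) cm
  set osc : ℕ → ℂ := fun N => ∑ n ∈ Icc 1 N, (((n : ℝ) ^ (-s) : ℝ) : ℂ) *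
    Complex.exp (Complex.I * ((2 * K * ((n : ℝ) ^ (1 - s) / (1 - s)) : ℝ) : ℂ))
  have hsum : ∀ N : ℕ, ∑ n ∈ Icc 1 N, ‖oscillatingProfile cp cm s φ n‖ ^ 2 =
      S * ∑ n ∈ Icc 1 N, (n : ℝ) ^ (-s) + 2 * (w * osc N).re := fun N => by
    simp only [sq_norm_oscillatingProfile, hφ, osc, mul_assoc 2 K, sum_add_distrib, mul_sum,
      Complex.re_sum]
    rfl
  clear_value S w
  have hrem : (fun N => 2 * (w * osc N).re) =o[atTop] fun N : ℕ => (N : ℝ) ^ (1 - s) := by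
    refine IsBigO.trans_isLittleO (IsBigO.of_bound (2 * ‖w‖) (Eventually.of_forall fun N => ?_))
      (isLittleO_sum_Icc_rpow_mul_cexp hs0 hs1 (by positivity : 0 < 2 * K))
    rw [norm_mul, Real.norm_two, Real.norm_eq_abs, mul_assoc]
    exact mul_le_mul_of_nonneg_left ((Complex.abs_re_le_norm _).trans (norm_mul_le _ _))
      zero_le_two
  refine ⟨S / 2, S / (1 - s) + S / 2, by positivity,
    by have := sub_pos.2 hs1; positivity, ?_⟩
  filter_upwards [hrem.bound (half_pos hS)] with N hN
  rw [Real.norm_eq_abs, Real.norm_of_nonneg (by positivity), abs_le] at hN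
  have hlo := mul_le_mul_of_nonneg_left (rpow_one_sub_le_sum_Icc_rpow_neg hs0.le hs1 N) hS.le
  have hhi := mul_le_mul_of_nonneg_left (sum_Icc_rpow_neg_le hs0.le hs1 N) hS.le
  rw [hsum]
  constructor
  · linarith
  · have : S * ((N : ℝ) ^ (1 - s) / (1 - s)) = S / (1 - s) * (N : ℝ) ^ (1 - s) := by ring
    linarith

theorem isLittleO_sum_Icc_sq_norm {E : Type*} [NormedAddCommGroup E] {s : ℝ} (hs0 : 0 ≤ s)
    (hs1 : s < 1) {e : ℕ → E} (he : e =o[atTop] fun n => (n : ℝ) ^ (-(s / 2))) :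
    (fun N => ∑ n ∈ Icc 1 N, ‖e n‖ ^ 2) =o[atTop] fun N => (N : ℝ) ^ (1 - s) := by
  have hsq : (fun n => ‖e n‖ ^ 2) =o[atTop] fun n => (n : ℝ) ^ (-s) := by
    refine (he.norm_left.pow two_pos).congr_right fun n => ?_
    rw [← Real.rpow_natCast, ← Real.rpow_mul (Nat.cast_nonneg n)]
    ring_nf
  have hsum_tendsto : Tendsto (fun N : ℕ => ∑ n ∈ Icc 1 N, (n : ℝ) ^ (-s)) atTop atTop :=
    tendsto_atTop_mono (rpow_one_sub_le_sum_Icc_rpow_neg hs0 hs1)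
      ((tendsto_rpow_atTop (sub_pos.2 hs1)).comp tendsto_natCast_atTop_atTop)
  refine (hsq.sum_Icc (fun n => by positivity) hsum_tendsto).trans_isBigO ?_
  refine IsBigO.of_bound (1 / (1 - s)) (Eventually.of_forall fun N => ?_)
  rw [Real.norm_of_nonneg (sum_nonneg fun n _ => by positivity),
    Real.norm_of_nonneg (by positivity), one_div_mul_eq_div]
  exact sum_Icc_rpow_neg_le hs0 hs1 N

theorem sq_norm_le_two_mul_sq_norm_add {E : Type*} [SeminormedAddCommGroup E] (a b : E) :
    ‖a‖ ^ 2 ≤ 2 * ‖b‖ ^ 2 + 2 * ‖a - b‖ ^ 2 := by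
  have h := norm_le_norm_add_norm_sub' a b
  nlinarith [norm_nonneg a, sq_nonneg (‖b‖ - ‖a - b‖)]

theorem eventually_bounds_sum_sq_norm_of_isLittleO {α ι E : Type*} [SeminormedAddCommGroup E]
    {l : Filter α} {s : α → Finset ι} {u v : ι → E} {g : α → ℝ} {C₁ C₂ : ℝ} (hC₁ : 0 < C₁)
    (hg : ∀ᶠ x in l, 0 ≤ g x)
    (hv : ∀ᶠ x in l, C₁ * g x ≤ ∑ i ∈ s x, ‖v i‖ ^ 2 ∧ ∑ i ∈ s x, ‖v i‖ ^ 2 ≤ C₂ * g x)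
    (huv : (fun x => ∑ i ∈ s x, ‖u i - v i‖ ^ 2) =o[l] g) :
    ∀ᶠ x in l, C₁ / 4 * g x ≤ ∑ i ∈ s x, ‖u i‖ ^ 2 ∧
      ∑ i ∈ s x, ‖u i‖ ^ 2 ≤ (2 * C₂ + C₁ / 2) * g x := by
  filter_upwards [hg, hv, huv.bound (by positivity : 0 < C₁ / 4)] with x hgx ⟨hlo, hhi⟩ hD
  rw [Real.norm_of_nonneg (sum_nonneg fun i _ => by positivity), Real.norm_of_nonneg hgx] at hD
  have hlower := sum_le_sum fun i (_ : i ∈ s x) => sq_norm_le_two_mul_sq_norm_add (v i) (u i)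
  have hupper := sum_le_sum fun i (_ : i ∈ s x) => sq_norm_le_two_mul_sq_norm_add (u i) (v i)
  simp only [norm_sub_rev (v _), sum_add_distrib, ← mul_sum] at hlower hupper
  constructor <;> nlinarith

/-- if `uₙ = c₊ n^{-α/4} e^{iφ(n)} + c₋ n^{-α/4} e^{-iφ(n)} + o(n^{-α/4})`
with `(c₊, c₋) ≠ (0,0)` and `φ(n) = (√(-bE)/2^{α/2}) n^{1-α/2}/(1-α/2)`, then the
partial ℓ²-sums of `u` grow exactly like `N^{1-α/2}`. -/
theorem stmt8 (α b E : ℝ) (h0 : 0 < α) (h1 : α ≤ 1) (hb : 0 < b) (hE : E < 0)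
    (cp cm : ℂ) (hc : ¬(cp = 0 ∧ cm = 0))
    (φ : ℕ → ℝ)
    (hφ : ∀ n : ℕ, φ n = (Real.sqrt (-(b * E)) / (2 : ℝ) ^ (α / 2))
        * ((n : ℝ) ^ (1 - α / 2) / (1 - α / 2)))
    (u : ℕ → ℂ)
    (hu : (fun n : ℕ => u n
        - cp * (((n : ℝ) ^ (-(α / 4)) : ℝ) : ℂ) * Complex.exp (Complex.I * (φ n : ℝ))
        - cm * (((n : ℝ) ^ (-(α / 4)) : ℝ) : ℂ) * Complex.exp (-Complex.I * (φ n : ℝ)))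
      =o[atTop] fun n : ℕ => (n : ℝ) ^ (-(α / 4))) :
    ∃ C₁ C₂ : ℝ, 0 < C₁ ∧ 0 < C₂ ∧ ∃ N₀ : ℕ, ∀ N : ℕ, N₀ ≤ N →
      C₁ * (N : ℝ) ^ (1 - α / 2) ≤ (∑ n ∈ Finset.Icc 1 N, ‖u n‖ ^ 2) ∧
      (∑ n ∈ Finset.Icc 1 N, ‖u n‖ ^ 2) ≤ C₂ * (N : ℝ) ^ (1 - α / 2) := by
  have hK : 0 < Real.sqrt (-(b * E)) / (2 : ℝ) ^ (α / 2) :=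
    div_pos (Real.sqrt_pos.2 (by nlinarith)) (by positivity)
  have hu' : (fun n => u n - oscillatingProfile cp cm (α / 2) φ n) =o[atTop]
      fun n : ℕ => (n : ℝ) ^ (-(α / 2 / 2)) := by
    simpa only [oscillatingProfile, sub_sub, show -(α / 4) = -(α / 2 / 2) by ring] using hu
  obtain ⟨C₁, C₂, hC₁, hC₂, hv⟩ :=
    eventually_bounds_sum_Icc_sq_norm_oscillatingProfile (s := α / 2) (by linarith)
      (by linarith) hK hc hφ
  have herr := isLittleO_sum_Icc_sq_norm (s := α / 2) (by linarith) (by linarith) hu'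
  obtain ⟨N₀, hN₀⟩ := eventually_atTop.1 <| eventually_bounds_sum_sq_norm_of_isLittleO hC₁
    (Eventually.of_forall fun N => by positivity) hv herr
  exact ⟨C₁ / 4, 2 * C₂ + C₁ / 2, by positivity, by positivity, N₀, hN₀⟩
end

section
/- Let Mᵦ = [[1, b],[0, 1]] and Bⱼ = -Mᵦ + (α/(2j))I + Dⱼ where Dⱼ is a diagonal matrix with ‖Dⱼ‖ = O(j^{-2}). Then Mᵦ^{-j}(-Bⱼ)Mᵦ^{j-1} = I - (α/(2j))[[1, -b],[0, 1]] + Eⱼ, where Eⱼ is upper triangular with (1,1)- and (2,2)-entries O(j^{-2}), (2,1)-entry 0, and (1,2)-entry O(j^{-1}). -/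
/-!
The powers `Mᵦᵏ = !![1, b k; 0, 1]` commute, so `Mᵦ^{-j} (Mᵦ - c I) Mᵦ^{j-1} = I - c Mᵦ⁻¹`;
the diagonal perturbation `D` stays upper triangular with the same diagonal, and its corner
picks up `b (j d₁ - (j - 1) d₀)`. With `d₀, d₁ = O(j⁻²)` that corner is `O(j⁻¹)`.
-/

lemma shear_conj_neg_shear_add_smul_one_add_diag {R : Type*} [CommRing R] (b c t d₀ d₁ : R) :
    !![1, b * -t; 0, 1]
        * -(-!![1, b; 0, 1] + c • (1 : Matrix (Fin 2) (Fin 2) R) + !![d₀, 0; 0, d₁])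
        * !![1, b * (t - 1); 0, 1]
      = 1 - c • !![1, -b; 0, 1] + !![-d₀, b * (t * d₁ - (t - 1) * d₀); 0, -d₁] := by
  rw [Matrix.one_fin_two]
  ext i k
  fin_cases i <;> fin_cases k <;> simp [Matrix.mul_apply, Fin.sum_univ_two] <;> ring

lemma abs_mul_sub_sub_one_mul_le {t x y C : ℝ} (ht : 1 ≤ t)
    (hx : |x| ≤ C / t ^ 2) (hy : |y| ≤ C / t ^ 2) :
    |t * x - (t - 1) * y| ≤ 2 * C / t := by
  have hC : 0 ≤ C / t ^ 2 := (abs_nonneg x).trans hx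
  calc |t * x - (t - 1) * y| ≤ |t * x| + |(t - 1) * y| := abs_sub _ _
    _ = t * |x| + (t - 1) * |y| := by
        rw [abs_mul, abs_mul, abs_of_nonneg (by linarith : (0 : ℝ) ≤ t),
          abs_of_nonneg (by linarith : (0 : ℝ) ≤ t - 1)]
    _ ≤ t * (C / t ^ 2) + t * (C / t ^ 2) := by gcongr; linarith
    _ = 2 * C / t := by field_simp; ring

theorem stmt11_general (b α : ℝ)
    (D : ℕ → Matrix (Fin 2) (Fin 2) ℝ)
    (hDdiag : ∀ j, D j 0 1 = 0 ∧ D j 1 0 = 0)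
    (CD : ℝ) (hD : ∀ j : ℕ, 1 ≤ j → ∀ i : Fin 2, |D j i i| ≤ CD / (j : ℝ) ^ 2)
    (B : ℕ → Matrix (Fin 2) (Fin 2) ℝ)
    (hB : ∀ j : ℕ, 1 ≤ j →
      B j = -(!![1, b; 0, 1]) + (α / (2 * (j : ℝ))) • (1 : Matrix (Fin 2) (Fin 2) ℝ) + D j)
    (Mp : ℤ → Matrix (Fin 2) (Fin 2) ℝ)
    (hMp : ∀ k : ℤ, Mp k = !![1, b * (k : ℝ); 0, 1]) :
    ∃ C' : ℝ, ∀ j : ℕ, 1 ≤ j → ∃ Er : Matrix (Fin 2) (Fin 2) ℝ,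
      Mp (-(j : ℤ)) * (-(B j)) * Mp ((j : ℤ) - 1)
        = 1 - (α / (2 * (j : ℝ))) • !![1, -b; 0, 1] + Er ∧
      Er 1 0 = 0 ∧ |Er 0 0| ≤ C' / (j : ℝ) ^ 2 ∧ |Er 1 1| ≤ C' / (j : ℝ) ^ 2 ∧
      |Er 0 1| ≤ C' / (j : ℝ) := by
  refine ⟨max CD (2 * |b| * CD), fun j hj => ?_⟩
  have hj1 : (1 : ℝ) ≤ j := by exact_mod_cast hj
  have hDj : D j = !![D j 0 0, 0; 0, D j 1 1] := by
    conv_lhs => rw [Matrix.eta_fin_two (D j), (hDdiag j).1, (hDdiag j).2]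
  refine ⟨!![-D j 0 0, b * (j * D j 1 1 - (j - 1) * D j 0 0); 0, -D j 1 1], ?_, rfl, ?_, ?_, ?_⟩
  · rw [hB j hj, hMp, hMp, hDj]
    push_cast
    exact shear_conj_neg_shear_add_smul_one_add_diag _ _ _ _ _
  all_goals simp only [Matrix.of_apply, Matrix.cons_val', Matrix.cons_val_zero,
    Matrix.cons_val_one, Matrix.empty_val', Matrix.cons_val_fin_one, abs_neg]
  · exact (hD j hj 0).trans (by gcongr; exact le_max_left _ _)
  · exact (hD j hj 1).trans (by gcongr; exact le_max_left _ _)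
  · have hcorner := abs_mul_sub_sub_one_mul_le hj1 (hD j hj 1) (hD j hj 0)
    calc |b * (j * D j 1 1 - (j - 1) * D j 0 0)| ≤ |b| * (2 * CD / j) := by
          rw [abs_mul]; gcongr
      _ = 2 * |b| * CD / j := by ring
      _ ≤ max CD (2 * |b| * CD) / j := by gcongr; exact le_max_right _ _

/-- with `Mᵦ = [[1,b],[0,1]]` (so `Mᵦᵏ = [[1,bk],[0,1]]`, `k ∈ ℤ`) and
`Bⱼ = -Mᵦ + (α/(2j))I + Dⱼ`, `Dⱼ` diagonal with `‖Dⱼ‖ = O(j⁻²)`, one has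
`Mᵦ^{-j}(-Bⱼ)Mᵦ^{j-1} = I - (α/(2j))[[1,-b],[0,1]] + Eⱼ` where `Eⱼ` is upper
triangular, diagonal entries `O(j⁻²)` and the `(1,2)`-entry `O(j⁻¹)`. -/
theorem stmt11 (b α : ℝ) (hb : 0 < b) (h0 : 0 < α) (h1 : α ≤ 1)
    (D : ℕ → Matrix (Fin 2) (Fin 2) ℝ)
    (hDdiag : ∀ j, D j 0 1 = 0 ∧ D j 1 0 = 0)
    (CD : ℝ) (hD : ∀ j : ℕ, 1 ≤ j → ∀ i : Fin 2, |D j i i| ≤ CD / (j : ℝ) ^ 2)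
    (B : ℕ → Matrix (Fin 2) (Fin 2) ℝ)
    (hB : ∀ j : ℕ, 1 ≤ j →
      B j = -(!![1, b; 0, 1]) + (α / (2 * (j : ℝ))) • (1 : Matrix (Fin 2) (Fin 2) ℝ) + D j)
    (Mp : ℤ → Matrix (Fin 2) (Fin 2) ℝ)
    (hMp : ∀ k : ℤ, Mp k = !![1, b * (k : ℝ); 0, 1]) :
    ∃ C' : ℝ, ∀ j : ℕ, 1 ≤ j → ∃ Er : Matrix (Fin 2) (Fin 2) ℝ,
      Mp (-(j : ℤ)) * (-(B j)) * Mp ((j : ℤ) - 1)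
        = 1 - (α / (2 * (j : ℝ))) • !![1, -b; 0, 1] + Er ∧
      Er 1 0 = 0 ∧ |Er 0 0| ≤ C' / (j : ℝ) ^ 2 ∧ |Er 1 1| ≤ C' / (j : ℝ) ^ 2 ∧
      |Er 0 1| ≤ C' / (j : ℝ) :=
  stmt11_general b α D hDdiag CD hD B hB Mp hMp
end

section
/- At energy E = 0, with aₙ = nᵅ, b_{2n-1} = b(2n-1)ᵅ, b_{2n} = 0 (b ≠ 0, 0 < α ≤ 1), the transfer matrix product satisfies Bₙ···B₁ = (-1)ⁿ n^{-α/2}[[C₁C₃ + o(1), C₂C₃bn + O(log n)],[0, C₂C₃ + o(1)]] for nonzero constants C₁, C₂, C₃; where Bₙ = T_{2n}T_{2n-1}. In particular, the product has an entry growing like n^{1-α/2}, and every nontrivial solution u of the difference equation aₙu_{n+1} + bₙuₙ + a_{n-1}u_{n-1} = 0 satisfies ∑|uₙ|² = ∞, so zero is not an eigenvalue of J. -/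
/-!
At the even sites `b_{2k} = 0`, so the recurrence links the odd-indexed values alone:
`(2k)^α u_{2k+1} = -(2k-1)^α u_{2k-1}`. Hence `u_{2k+1}² = u_1² ∏_{j ≤ k} ((2j-1)/(2j))^{2α}`,
and the Wallis-type bound `∏_{j ≤ k} ((2j-1)/(2j))² ≥ 1/(4k+1)` gives
`u_{2k+1}² ≥ u_1² (4k+1)^{-α}`, which is not summable for `α ≤ 1` unless `u_1 = 0`.
Finally `u_1 = 0` forces `u_n = 0` for all `n ≥ 1`, since `a_0 = 0` and `a_n ≠ 0` otherwise.
-/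

open Real

theorem eq_zero_of_jacobi_recurrence_of_eq_zero {a c u : ℕ → ℝ} (ha : ∀ n, 1 ≤ n → a n ≠ 0)
    (ha0 : a 0 = 0)
    (hu : ∀ n, 1 ≤ n → a n * u (n + 1) + c n * u n + a (n - 1) * u (n - 1) = 0)
    (hu1 : u 1 = 0) : ∀ n, 1 ≤ n → u n = 0 := by
  suffices h : ∀ n, u (n + 1) = 0 ∧ u (n + 2) = 0 by
    intro n hn
    obtain ⟨m, rfl⟩ := Nat.exists_eq_add_of_le' hn
    exact (h m).1
  intro n
  induction n with
  | zero =>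
    have h := hu 1 le_rfl
    simp only [hu1, ha0, mul_zero, zero_mul, add_zero] at h
    exact ⟨hu1, (mul_eq_zero.mp h).resolve_left (ha 1 le_rfl)⟩
  | succ n ih =>
    have h := hu (n + 2) (by omega)
    rw [show n + 2 - 1 = n + 1 from rfl, ih.1, ih.2, mul_zero, mul_zero, add_zero, add_zero] at h
    exact ⟨ih.2, (mul_eq_zero.mp h).resolve_left (ha (n + 2) (by omega))⟩

section EvenStep

variable {α : ℝ} {v : ℕ → ℝ}

theorem sq_le_rpow_mul_sq_of_even_step (hα : 0 ≤ α)
    (hv : ∀ k : ℕ, (2 * k + 2 : ℝ) ^ α * v (k + 1) + (2 * k + 1 : ℝ) ^ α * v k = 0) (k : ℕ) :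
    v 0 ^ 2 ≤ (4 * k + 1 : ℝ) ^ α * v k ^ 2 := by
  induction k with
  | zero => simp
  | succ k ih =>
    have hsq : ((2 * k + 2 : ℝ) ^ 2) ^ α * v (k + 1) ^ 2
        = ((2 * k + 1 : ℝ) ^ 2) ^ α * v k ^ 2 := by
      rw [← rpow_pow_comm (by positivity), ← rpow_pow_comm (by positivity), ← mul_pow, ← mul_pow,
        eq_neg_of_add_eq_zero_left (hv k), neg_sq]
    -- `(2k+2)²(4k+1)` and `(2k+1)²(4k+5)` differ by exactly one.
    have hwallis : ((2 * k + 2 : ℝ) ^ 2 * (4 * k + 1)) ^ α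
        ≤ ((2 * k + 1 : ℝ) ^ 2 * (4 * k + 5)) ^ α :=
      rpow_le_rpow (by positivity) (by nlinarith) hα
    rw [mul_rpow (by positivity) (by positivity), mul_rpow (by positivity) (by positivity)]
      at hwallis
    push_cast
    refine le_of_mul_le_mul_left ?_ (by positivity : 0 < ((2 * k + 2 : ℝ) ^ 2) ^ α)
    calc ((2 * k + 2 : ℝ) ^ 2) ^ α * v 0 ^ 2
        ≤ ((2 * k + 2 : ℝ) ^ 2) ^ α * ((4 * k + 1 : ℝ) ^ α * v k ^ 2) := by gcongr
      _ ≤ ((2 * k + 1 : ℝ) ^ 2) ^ α * (4 * k + 5) ^ α * v k ^ 2 := by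
        rw [← mul_assoc]; gcongr
      _ = ((2 * k + 2 : ℝ) ^ 2) ^ α * ((4 * (k + 1) + 1) ^ α * v (k + 1) ^ 2) := by
        rw [mul_right_comm, ← hsq]; ring_nf

theorem not_summable_of_le_abs_add_rpow_mul {a c : ℝ} (hα : α ≤ 1) (hc : 0 < c) {w : ℕ → ℝ}
    (hw : ∀ k : ℕ, c ≤ |k + a| ^ α * w k) : ¬ Summable w := by
  intro hs
  have hpos (k : ℕ) : 0 < |k + a| ^ α := by
    refine (rpow_nonneg (abs_nonneg _) α).lt_of_ne fun h => ?_
    have := hw k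
    rw [← h, zero_mul] at this
    exact hc.not_ge this
  have hle (k : ℕ) : 1 / |k + a| ^ α ≤ c⁻¹ * w k := by
    rw [div_le_iff₀ (hpos k), mul_right_comm, mul_assoc, le_inv_mul_iff₀ hc, mul_one]
    exact hw k
  have := (hs.mul_left c⁻¹).of_nonneg_of_le (fun k => (one_div_pos.mpr (hpos k)).le) hle
  exact hα.not_gt ((summable_one_div_nat_add_rpow a α).mp this)

theorem not_summable_sq_of_even_step (h0 : 0 ≤ α) (h1 : α ≤ 1)
    (hv : ∀ k : ℕ, (2 * k + 2 : ℝ) ^ α * v (k + 1) + (2 * k + 1 : ℝ) ^ α * v k = 0)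
    (hv0 : v 0 ≠ 0) : ¬ Summable (fun k => v k ^ 2) := by
  refine not_summable_of_le_abs_add_rpow_mul (a := 1 / 4) (c := v 0 ^ 2 / 4 ^ α) h1
    (by positivity) fun k => ?_
  have h := sq_le_rpow_mul_sq_of_even_step h0 hv k
  rw [show (4 * k + 1 : ℝ) = 4 * |(k : ℝ) + 1 / 4| by rw [abs_of_pos (by positivity)]; ring,
    mul_rpow (by norm_num) (abs_nonneg _), mul_assoc] at h
  rwa [div_le_iff₀' (by positivity)]

end EvenStep

theorem stmt12_general (b α : ℝ) (h0 : 0 < α) (h1 : α ≤ 1)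
    (u : ℕ → ℝ)
    (hu : ∀ n : ℕ, 1 ≤ n →
      (n : ℝ) ^ α * u (n + 1) + (if Odd n then b * (n : ℝ) ^ α else 0) * u n
        + ((n : ℝ) - 1) ^ α * u (n - 1) = 0)
    (hnt : ∃ n : ℕ, 1 ≤ n ∧ u n ≠ 0) :
    ¬ Summable (fun n : ℕ => (u n) ^ 2) := by
  have hjacobi : ∀ n : ℕ, 1 ≤ n → (n : ℝ) ^ α * u (n + 1)
      + (if Odd n then b * (n : ℝ) ^ α else 0) * u n + ((n - 1 : ℕ) : ℝ) ^ α * u (n - 1) = 0 :=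
    fun n hn => by rw [Nat.cast_sub hn, Nat.cast_one]; exact hu n hn
  have hu1 : u 1 ≠ 0 := fun h => by
    obtain ⟨n, hn, hun⟩ := hnt
    exact hun (eq_zero_of_jacobi_recurrence_of_eq_zero (a := fun n : ℕ => (n : ℝ) ^ α)
      (fun n hn => (rpow_pos_of_pos (by exact_mod_cast hn) α).ne') (by simp [h0.ne'])
      hjacobi h n hn)
  have hodd (k : ℕ) :
      (2 * k + 2 : ℝ) ^ α * u (2 * (k + 1) + 1) + (2 * k + 1 : ℝ) ^ α * u (2 * k + 1) = 0 := by
    have h := hjacobi (2 * k + 2) (by omega)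
    rw [if_neg (by simp [Nat.odd_iff]), zero_mul, add_zero] at h
    push_cast at h
    exact h
  intro hS
  exact not_summable_sq_of_even_step (v := fun k => u (2 * k + 1)) h0.le h1 hodd hu1
    (hS.comp_injective (strictMono_nat_of_lt_succ fun k => by omega).injective)

/-- at energy `E = 0`, with `aₙ = nᵅ`, `b_{2n-1} = b(2n-1)ᵅ`,
`b_{2n} = 0` (`b ≠ 0`, `0 < α ≤ 1`), every nontrivial solution of
`aₙ u_{n+1} + bₙ uₙ + a_{n-1} u_{n-1} = 0` fails to be square-summable;
in particular zero is not an eigenvalue of `J`. -/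
theorem stmt12 (b α : ℝ) (hb : b ≠ 0) (h0 : 0 < α) (h1 : α ≤ 1)
    (u : ℕ → ℝ)
    (hu : ∀ n : ℕ, 1 ≤ n →
      (n : ℝ) ^ α * u (n + 1) + (if Odd n then b * (n : ℝ) ^ α else 0) * u n
        + ((n : ℝ) - 1) ^ α * u (n - 1) = 0)
    (hnt : ∃ n : ℕ, 1 ≤ n ∧ u n ≠ 0) :
    ¬ Summable (fun n : ℕ => (u n) ^ 2) :=
  stmt12_general b α h0 h1 u hu hnt
end

section
/- Let b ≥ √6, 0 < α ≤ 1, a > 0, and m ∈ ℤ₊ with (a/(2b))^{1/α} < 2m-1 < (3a/(2b))^{1/α}. Then for the critical Jacobi operator J (with aₙ = nᵅ, b_{2m-1} = b(2m-1)ᵅ, b even entries zero), the test vector δ_{2m-1} satisfies ‖(J - aI)δ_{2m-1}‖² ≤ a²‖δ_{2m-1}‖². Concretely: (2m-2)^{2α} + (2m-1)^{2α} + (b(2m-1)ᵅ - a)² ≤ a². -/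
/-- for `b ≥ √6`, `0 < α ≤ 1`, `a > 0` and `m ∈ ℤ₊` with
`(a/(2b))^{1/α} < 2m-1 < (3a/(2b))^{1/α}`, the test vector `δ_{2m-1}` satisfies
`‖(J - a)δ_{2m-1}‖² ≤ a²‖δ_{2m-1}‖²`; concretely
`(2m-2)^{2α} + (2m-1)^{2α} + (b(2m-1)ᵅ - a)² ≤ a²`. -/
theorem stmt18 (b α a : ℝ) (hb : Real.sqrt 6 ≤ b) (h0 : 0 < α) (h1 : α ≤ 1)
    (ha : 0 < a) (m : ℕ) (hm : 1 ≤ m)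
    (hlow : (a / (2 * b)) ^ (1 / α) < 2 * (m : ℝ) - 1)
    (hhigh : 2 * (m : ℝ) - 1 < (3 * a / (2 * b)) ^ (1 / α)) :
    (2 * (m : ℝ) - 2) ^ (2 * α) + (2 * (m : ℝ) - 1) ^ (2 * α)
      + (b * (2 * (m : ℝ) - 1) ^ α - a) ^ 2 ≤ a ^ 2 := by
  have hb0 : 0 < b := lt_of_lt_of_le (Real.sqrt_pos.mpr (by norm_num)) hb
  have hb6 : 6 ≤ b ^ 2 := by
    nlinarith [Real.sq_sqrt (by norm_num : (6:ℝ) ≥ 0), Real.sqrt_nonneg 6]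
  set x : ℝ := 2 * (m : ℝ) - 1 with hx
  clear_value x
  have hm1 : (1:ℝ) ≤ (m : ℝ) := by exact_mod_cast hm
  have hx1 : (1:ℝ) ≤ x := by simp [hx]; linarith
  have hx0 : (0:ℝ) ≤ x := by linarith
  have hc1 : (0:ℝ) < a / (2 * b) := by positivity
  have hc2 : (0:ℝ) < 3 * a / (2 * b) := by positivity
  -- upper bound on x^α
  have hup : x ^ α < 3 * a / (2 * b) := by
    have := Real.rpow_lt_rpow hx0 hhigh h0
    rwa [← Real.rpow_mul hc2.le, one_div, inv_mul_cancel₀ (ne_of_gt h0),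
      Real.rpow_one] at this
  have hlo : a / (2 * b) < x ^ α := by
    have := Real.rpow_lt_rpow (Real.rpow_nonneg hc1.le _) hlow h0
    rwa [← Real.rpow_mul hc1.le, one_div, inv_mul_cancel₀ (ne_of_gt h0),
      Real.rpow_one] at this
  have hxa0 : (0:ℝ) < x ^ α := Real.rpow_pos_of_pos (by linarith) α
  have hsq : x ^ (2 * α) = (x ^ α) ^ 2 := by
    rw [mul_comm, Real.rpow_mul hx0, Real.rpow_two]
  have hle : (2 * (m : ℝ) - 2) ^ (2 * α) ≤ x ^ (2 * α) := by
    apply Real.rpow_le_rpow (by linarith) (by simp [hx]; linarith) (by positivity)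
  -- from the bounds: |b x^α - a| < a/2, and (x^α)^2 < 9a²/(4b²)
  have h1' : b * x ^ α < 3 * a / 2 := by
    have := (lt_div_iff₀ (by positivity : (0:ℝ) < 2 * b)).mp hup
    nlinarith
  have h2' : a / 2 < b * x ^ α := by
    have := (div_lt_iff₀ (by positivity : (0:ℝ) < 2 * b)).mp hlo
    nlinarith
  have h3' : (x ^ α) ^ 2 < 9 * a ^ 2 / (4 * b ^ 2) := by
    have := (lt_div_iff₀ (by positivity : (0:ℝ) < 2 * b)).mp hup
    rw [lt_div_iff₀ (by positivity : (0:ℝ) < 4 * b ^ 2)]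
    nlinarith
  have h4' : 9 * a ^ 2 / (4 * b ^ 2) ≤ 3 * a ^ 2 / 8 := by
    rw [div_le_div_iff₀ (by positivity) (by norm_num)]
    nlinarith
  calc (2 * (m : ℝ) - 2) ^ (2 * α) + x ^ (2 * α) + (b * x ^ α - a) ^ 2
      ≤ x ^ (2 * α) + x ^ (2 * α) + (b * x ^ α - a) ^ 2 := by linarith
    _ = 2 * (x ^ α) ^ 2 + (b * x ^ α - a) ^ 2 := by rw [hsq]; ring
    _ ≤ a ^ 2 := by
        have h5' : (b * x ^ α - a) ^ 2 ≤ a ^ 2 / 4 := by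
          have hp := mul_pos (sub_pos.mpr h2') (sub_pos.mpr h1')
          nlinarith [hp]
        linarith
end
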